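/- Let δ ~ N(0,1), s > 0, Δ ∈ ℝ, ε ∈ [0, 1/2], β > 0, and let σ(x) = clip(x + 1/2, 0, 1). Define y_ε(x) as a {−1,1}-valued random variable independent of everything else given its parameter, equal to 1 with probability ε + (1−2ε)σ(x). Then α(Δ, s, β, ε) := E[y_ε(s(Δ + βδ)) · δ] = (1−2ε)·s·β·(erf((Δ + 1/(2s))/(β√2)) − erf((Δ − 1/(2s))/(β√2))). -/

import Mathlib

open MeasureTheory ProbabilityTheory Real

/-- The error function `erf x = (2/√π) ∫₀ˣ e^{-t²} dt`. -/
noncomputable def erf (x : ℝ) : ℝ := (2 / Real.sqrt π) * ∫ t in (0:ℝ)..x, Real.exp (-t ^ 2)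

open Filter Set
open scoped Topology NNReal

/-!
Conditioning on `δ` replaces `Y` by its conditional mean `(1 - 2ε) g(δ)`, where
`g x = clip(2s(Δ + βx), -1, 1)`, so `α = (1 - 2ε) E[g(δ) δ]`. Since the standard normal density
satisfies `φ' = -x φ`, Gaussian integration by parts (Stein's identity) gives
`E[g(δ) δ] = E[g'(δ)]`, and `g'` is the constant `2sβ` on the interval `[a, b]` where the clip is
inactive. The standard normal mass of `[a, b]` is `(erf (b/√2) - erf (a/√2)) / 2`.
-/

lemma erf_neg (x : ℝ) : erf (-x) = -erf x := by
  have h := intervalIntegral.integral_comp_neg (a := 0) (b := x) (fun t => exp (-t ^ 2))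
  simp only [neg_sq, neg_zero] at h
  rw [erf, erf, intervalIntegral.integral_symm, ← h]
  ring

lemma gaussianPDFReal_zero_one :
    gaussianPDFReal 0 1 = fun x => (√(2 * π))⁻¹ * exp (-x ^ 2 / 2) := by
  funext x
  simp [gaussianPDFReal]

lemma integral_gaussianPDFReal_zero_one (a b : ℝ) :
    ∫ x in a..b, gaussianPDFReal 0 1 x = (erf (b / √2) - erf (a / √2)) / 2 := by
  have hφ : ∀ x, gaussianPDFReal 0 1 x = (√2 * √π)⁻¹ * exp (-(x / √2) ^ 2) := by
    intro x
    simp [gaussianPDFReal, div_pow, neg_div, sqrt_mul]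
  have hc : Continuous fun t : ℝ => exp (-t ^ 2) := by fun_prop
  simp_rw [hφ]
  rw [intervalIntegral.integral_const_mul,
    intervalIntegral.integral_comp_div (fun t => exp (-t ^ 2)) (by positivity),
    ← intervalIntegral.integral_interval_sub_left (hc.intervalIntegrable 0 _)
      (hc.intervalIntegrable 0 _), erf, erf, smul_eq_mul]
  field_simp

lemma hasDerivAt_neg_gaussianPDFReal_zero_one (x : ℝ) :
    HasDerivAt (-gaussianPDFReal 0 1) (x * gaussianPDFReal 0 1 x) x := by
  rw [gaussianPDFReal_zero_one]
  exact (((hasDerivAt_pow 2 x).fun_neg.div_const 2).exp.const_mul _).neg.congr_deriv (by ring)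

lemma tendsto_gaussianPDFReal_zero_one_cocompact :
    Tendsto (gaussianPDFReal 0 1) (cocompact ℝ) (𝓝 0) := by
  have h := (tendsto_rpow_abs_mul_exp_neg_mul_sq_cocompact one_half_pos 0).const_mul
    (√(2 * π))⁻¹
  rw [mul_zero] at h
  refine h.congr fun x => ?_
  rw [gaussianPDFReal_zero_one, rpow_zero, one_mul]
  ring_nf

lemma integrable_mul_gaussianPDFReal_zero_one :
    Integrable fun x => x * gaussianPDFReal 0 1 x := by
  refine ((integrable_mul_exp_neg_mul_sq one_half_pos).const_mul (√(2 * π))⁻¹).congr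
    (ae_of_all _ fun x => ?_)
  rw [gaussianPDFReal_zero_one]
  ring_nf

lemma integral_Iic_mul_gaussianPDFReal_zero_one (a : ℝ) :
    ∫ x in Iic a, x * gaussianPDFReal 0 1 x = -gaussianPDFReal 0 1 a := by
  have h := integral_Iic_of_hasDerivAt_of_tendsto' (a := a)
    (fun x _ => hasDerivAt_neg_gaussianPDFReal_zero_one x)
    integrable_mul_gaussianPDFReal_zero_one.integrableOn
    (tendsto_gaussianPDFReal_zero_one_cocompact.mono_left atBot_le_cocompact).neg
  simpa using h

lemma integral_Ioi_mul_gaussianPDFReal_zero_one (b : ℝ) :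
    ∫ x in Ioi b, x * gaussianPDFReal 0 1 x = gaussianPDFReal 0 1 b := by
  have h := integral_Ioi_of_hasDerivAt_of_tendsto' (a := b)
    (fun x _ => hasDerivAt_neg_gaussianPDFReal_zero_one x)
    integrable_mul_gaussianPDFReal_zero_one.integrableOn
    (tendsto_gaussianPDFReal_zero_one_cocompact.mono_left atTop_le_cocompact).neg
  simpa using h

lemma integral_affine_mul_mul_gaussianPDFReal_zero_one (p m a b : ℝ) :
    ∫ x in a..b, (p + m * x) * (x * gaussianPDFReal 0 1 x) =
      (p + m * a) * gaussianPDFReal 0 1 a - (p + m * b) * gaussianPDFReal 0 1 b +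
        m * ∫ x in a..b, gaussianPDFReal 0 1 x := by
  have hφ : Continuous (gaussianPDFReal 0 1) := by
    rw [gaussianPDFReal_zero_one]; fun_prop
  rw [intervalIntegral.integral_mul_deriv_eq_deriv_mul
    (fun x _ => ((hasDerivAt_id' x).const_mul m).const_add p)
    (fun x _ => hasDerivAt_neg_gaussianPDFReal_zero_one x)
    intervalIntegrable_const ((continuous_id.mul hφ).intervalIntegrable a b)]
  simp only [Pi.neg_apply, intervalIntegral.integral_neg, intervalIntegral.integral_const_mul]
  ring

/-- Stein's identity for a clipped affine function: on the two tails the integrand is `∓ x φ x`,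
whose integrals `φ a`, `φ b` cancel the boundary terms of the integration by parts on `[a, b]`. -/
theorem integral_clip_mul_mul_gaussianPDFReal_zero_one {p m a b : ℝ} (hab : a ≤ b)
    (ha : p + m * a = -1) (hb : p + m * b = 1) :
    ∫ x, min (max (p + m * x) (-1)) 1 * (x * gaussianPDFReal 0 1 x) =
      m * ∫ x in a..b, gaussianPDFReal 0 1 x := by
  set f := fun x => min (max (p + m * x) (-1)) 1 * (x * gaussianPDFReal 0 1 x)
  have hm : 0 ≤ m := by nlinarith
  have hf : Integrable f := by
    refine integrable_mul_gaussianPDFReal_zero_one.bdd_mul (c := 1) (by fun_prop)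
      (ae_of_all _ fun x => ?_)
    rw [norm_eq_abs, abs_le]
    exact ⟨le_min (le_max_right _ _) (by norm_num), min_le_right _ _⟩
  have hleft : ∫ x in Iic a, f x = gaussianPDFReal 0 1 a := by
    rw [← neg_neg (gaussianPDFReal 0 1 a), ← integral_Iic_mul_gaussianPDFReal_zero_one,
      ← integral_neg]
    refine setIntegral_congr_fun measurableSet_Iic fun x (hx : x ≤ a) => ?_
    have := mul_le_mul_of_nonneg_left hx hm
    dsimp only [f]
    rw [max_eq_right (by linarith), min_eq_left (by norm_num), neg_one_mul]
  have hmid : ∫ x in a..b, f x = ∫ x in a..b, (p + m * x) * (x * gaussianPDFReal 0 1 x) := by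
    refine intervalIntegral.integral_congr fun x hx => ?_
    rw [uIcc_of_le hab] at hx
    have := mul_le_mul_of_nonneg_left hx.1 hm
    have := mul_le_mul_of_nonneg_left hx.2 hm
    dsimp only [f]
    rw [max_eq_left (by linarith), min_eq_left (by linarith)]
  have hright : ∫ x in Ioi b, f x = gaussianPDFReal 0 1 b := by
    rw [← integral_Ioi_mul_gaussianPDFReal_zero_one]
    refine setIntegral_congr_fun measurableSet_Ioi fun x (hx : b < x) => ?_
    have := mul_le_mul_of_nonneg_left hx.le hm
    dsimp only [f]
    rw [max_eq_left (by linarith), min_eq_right (by linarith), one_mul]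
  have hsplit := intervalIntegral.integral_Iic_add_Ioi (b := b) hf.integrableOn hf.integrableOn
  have hIic := intervalIntegral.integral_Iic_sub_Iic (a := a) (b := b) hf.integrableOn
    hf.integrableOn
  have hparts := integral_affine_mul_mul_gaussianPDFReal_zero_one p m a b
  rw [ha, hb] at hparts
  linarith

lemma integral_mul_condExp_of_stronglyMeasurable_left {Ω : Type*} {m m₀ : MeasurableSpace Ω}
    {μ : Measure Ω} (hm : m ≤ m₀) [SigmaFinite (μ.trim hm)] {f g : Ω → ℝ}
    (hf : StronglyMeasurable[m] f) (hfg : Integrable (f * g) μ) (hg : Integrable g μ) :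
    ∫ ω, f ω * μ[g | m] ω ∂μ = ∫ ω, f ω * g ω ∂μ := by
  calc ∫ ω, f ω * μ[g | m] ω ∂μ = ∫ ω, μ[f * g | m] ω ∂μ :=
        integral_congr_ae (condExp_mul_of_stronglyMeasurable_left hf hfg hg).symm
    _ = ∫ ω, f ω * g ω ∂μ := integral_condExp hm

lemma integral_mul_eq_integral_mul_gaussianPDFReal_of_condExp_eq {Ω : Type*}
    [MeasurableSpace Ω] {μ : Measure Ω} [IsFiniteMeasure μ] {X Y : Ω → ℝ} (hX : Measurable X)
    {m : ℝ} {v : ℝ≥0} (hv : v ≠ 0) (hlaw : μ.map X = gaussianReal m v) (hY : Measurable Y)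
    {C : ℝ} (hY_le : ∀ ω, ‖Y ω‖ ≤ C) {g : ℝ → ℝ} (hg : Continuous g)
    (hcond : μ[Y | MeasurableSpace.comap X inferInstance] =ᵐ[μ] g ∘ X) :
    ∫ ω, Y ω * X ω ∂μ = ∫ x, x * g x * gaussianPDFReal m v x := by
  have hXint : Integrable X μ := by
    have : Integrable id (μ.map X) := hlaw ▸ (memLp_id_gaussianReal 1).integrable le_rfl
    exact this.comp_measurable hX
  have hYint : Integrable Y μ :=
    (integrable_const C).mono' hY.aestronglyMeasurable (ae_of_all _ hY_le)
  calc ∫ ω, Y ω * X ω ∂μ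
      = ∫ ω, X ω * μ[Y | MeasurableSpace.comap X inferInstance] ω ∂μ := by
        rw [integral_mul_condExp_of_stronglyMeasurable_left hX.comap_le
          (Measurable.of_comap_le le_rfl).stronglyMeasurable
          (hXint.mul_bdd hY.aestronglyMeasurable (ae_of_all _ hY_le)) hYint]
        simp_rw [mul_comm]
    _ = ∫ ω, X ω * g (X ω) ∂μ := integral_congr_ae (hcond.mono fun ω hω => congrArg (X ω * ·) hω)
    _ = ∫ x, x * g x * gaussianPDFReal m v x := by
        rw [← integral_map (f := fun x => x * g x) hX.aemeasurable (by fun_prop), hlaw,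
          integral_gaussianReal_eq_integral_smul hv]
        simp_rw [smul_eq_mul, mul_comm]

lemma two_mul_clip_add_half_sub_one (u : ℝ) :
    2 * min (max (u + 1 / 2) 0) 1 - 1 = min (max (2 * u) (-1)) 1 := by
  simp only [max_def, min_def]
  split_ifs <;> linarith

theorem alpha_formula_clipped_sigmoid_general
    {Ω : Type*} [MeasurableSpace Ω] (μ : Measure Ω) [IsProbabilityMeasure μ]
    (δ Y : Ω → ℝ) (hδm : Measurable δ) (hYm : Measurable Y)
    (hδlaw : μ.map δ = gaussianReal 0 1)
    (hYrange : ∀ ω, Y ω = 1 ∨ Y ω = -1)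
    (Δ s β ε : ℝ) (hs : 0 < s) (hβ : 0 < β)
    (hcond : μ[Y | MeasurableSpace.comap δ inferInstance] =ᵐ[μ]
      fun ω => 2 * (ε + (1 - 2 * ε) * min (max (s * (Δ + β * δ ω) + 1 / 2) 0) 1) - 1) :
    ∫ ω, Y ω * δ ω ∂μ =
      (1 - 2 * ε) * s * β *
        (erf ((Δ + 1 / (2 * s)) / (β * Real.sqrt 2)) -
          erf ((Δ - 1 / (2 * s)) / (β * Real.sqrt 2))) := by
  set g : ℝ → ℝ := fun u => 2 * (ε + (1 - 2 * ε) * min (max (s * (Δ + β * u) + 1 / 2) 0) 1) - 1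
  have hY_le : ∀ ω, ‖Y ω‖ ≤ 1 := fun ω => by rcases hYrange ω with h | h <;> simp [h]
  have hg_eq : ∀ x, x * g x * gaussianPDFReal 0 1 x = (1 - 2 * ε) *
      (min (max (2 * s * Δ + 2 * s * β * x) (-1)) 1 * (x * gaussianPDFReal 0 1 x)) := fun x => by
    rw [show 2 * s * Δ + 2 * s * β * x = 2 * (s * (Δ + β * x)) by ring,
      ← two_mul_clip_add_half_sub_one]
    ring
  have hab : -(Δ + 1 / (2 * s)) / β ≤ (1 / (2 * s) - Δ) / β := by
    gcongr
    linarith [one_div_pos.2 (mul_pos two_pos hs)]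
  rw [integral_mul_eq_integral_mul_gaussianPDFReal_of_condExp_eq hδm one_ne_zero hδlaw hYm hY_le
      (g := g) (by fun_prop) hcond, integral_congr_ae (ae_of_all _ hg_eq), integral_const_mul,
    integral_clip_mul_mul_gaussianPDFReal_zero_one hab (by field_simp; ring) (by field_simp; ring),
    integral_gaussianPDFReal_zero_one, div_div, div_div, neg_div, erf_neg, ← neg_sub Δ, neg_div,
    erf_neg]
  field_simp
  ring

/-- Proposition 1, Eq. (6): for δ ~ N(0,1) and `y_ε(u)` a {-1,1}-valued Bernoulli with
success probability `ε + (1-2ε)σ(u)` (σ the clipped linear sigmoid), conditionally on δ,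
`α(Δ,s,β,ε) = E[y_ε(s(Δ+βδ))·δ] = (1-2ε)sβ(erf((Δ+1/(2s))/(β√2)) - erf((Δ-1/(2s))/(β√2)))`. -/
theorem alpha_formula_clipped_sigmoid
    {Ω : Type*} [MeasurableSpace Ω] (μ : Measure Ω) [IsProbabilityMeasure μ]
    (δ Y : Ω → ℝ) (hδm : Measurable δ) (hYm : Measurable Y)
    (hδlaw : μ.map δ = gaussianReal 0 1)
    (hYrange : ∀ ω, Y ω = 1 ∨ Y ω = -1)
    (Δ s β ε : ℝ) (hs : 0 < s) (hβ : 0 < β) (hε : ε ∈ Set.Icc (0 : ℝ) (1 / 2))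
    (hcond : μ[Y | MeasurableSpace.comap δ inferInstance] =ᵐ[μ]
      fun ω => 2 * (ε + (1 - 2 * ε) * min (max (s * (Δ + β * δ ω) + 1 / 2) 0) 1) - 1) :
    ∫ ω, Y ω * δ ω ∂μ =
      (1 - 2 * ε) * s * β *
        (erf ((Δ + 1 / (2 * s)) / (β * Real.sqrt 2)) -
          erf ((Δ - 1 / (2 * s)) / (β * Real.sqrt 2))) :=
  alpha_formula_clipped_sigmoid_general μ δ Y hδm hYm hδlaw hYrange Δ s β ε hs hβ hcond
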